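/- Let β₁ < 0, β₂ = -β₁ + δ with δ > 0, let I: [0,1] → ℝ be continuous, symmetric about 1/2, decreasing on [0,1/2], with I(1/2) = 0 and I(0) = I(1) finite, and let p ≥ 2 be an integer. Set L(u) = β₁u + β₂u^p - I(u)/2. Then for β₁ sufficiently negative (depending on δ, p, I), every global maximizer u* of L on [0,1] satisfies u* > 1/2; in particular L(1) = β₁ + β₂ - I(1)/2 > L(0) = -I(0)/2. -/
import Mathlib


theorem stmt19 (I : ℝ → ℝ)
    (hcont : ContinuousOn I (Set.Icc (0:ℝ) 1))
    (hsym : ∀ u ∈ Set.Icc (0:ℝ) 1, I u = I (1 - u))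
    (hdec : AntitoneOn I (Set.Icc (0:ℝ) (1/2)))
    (hnonneg : ∀ u ∈ Set.Icc (0:ℝ) 1, 0 ≤ I u)
    (hhalf : I (1/2) = 0)
    (p : ℕ) (hp : 2 ≤ p) (δ : ℝ) (hδ : 0 < δ) :
    ∃ B : ℝ, B < 0 ∧ ∀ β₁ : ℝ, β₁ < B →
      (∀ u ∈ Set.Icc (0:ℝ) 1,
        (∀ v ∈ Set.Icc (0:ℝ) 1,
          β₁ * v + (-β₁ + δ) * v^p - I v / 2 ≤ β₁ * u + (-β₁ + δ) * u^p - I u / 2) →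
        1/2 < u) ∧
      β₁ * 0 + (-β₁ + δ) * 0^p - I 0 / 2 <
        β₁ * 1 + (-β₁ + δ) * 1^p - I 1 / 2 := by
  have h01 : I 0 = I 1 := by simpa using hsym 0 (by norm_num)
  have hc0 : ContinuousWithinAt I (Set.Icc (0:ℝ) 1) 0 := hcont 0 (by norm_num)
  rw [Metric.continuousWithinAt_iff] at hc0
  obtain ⟨ε, hε, hεI⟩ := hc0 (δ/2) (by linarith)
  set ε₀ : ℝ := min (ε/2) (1/2) with hε₀def
  have hε₀pos : 0 < ε₀ := lt_min (by linarith) (by norm_num)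
  have hε₀half : ε₀ ≤ 1/2 := min_le_right _ _
  have hε₀ε : ε₀ < ε := lt_of_le_of_lt (min_le_left _ _) (by linarith)
  have hI1 : 0 ≤ I 1 := hnonneg 1 (by norm_num)
  refine ⟨min (-1) (-(I 1)/ε₀ - 1), lt_of_le_of_lt (min_le_left _ _) (by norm_num), ?_⟩
  intro β₁ hβ₁
  have hβB1 : β₁ < -1 := lt_of_lt_of_le hβ₁ (min_le_left _ _)
  have hβB2 : β₁ < -(I 1)/ε₀ - 1 := lt_of_lt_of_le hβ₁ (min_le_right _ _)
  have hβneg : β₁ < 0 := by linarith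
  constructor
  · intro u hu hmax
    by_contra hle
    push_neg at hle
    have hu0 : 0 ≤ u := hu.1
    have hu1 : u ≤ 1 := hu.2
    have hup2 : u ^ p ≤ u ^ 2 := pow_le_pow_of_le_one hu0 hu1 hp
    have hupu : u ^ p ≤ u := le_trans hup2 (by nlinarith)
    have hup0 : 0 ≤ u ^ p := pow_nonneg hu0 p
    have hmax1 : δ - I 1 / 2 ≤ β₁ * u + (-β₁ + δ) * u ^ p - I u / 2 := by
      have := hmax 1 (by norm_num)
      rw [one_pow] at this
      linarith
    rcases le_or_gt u ε₀ with hcase | hcase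
    · -- u small: use continuity of I at 0
      have hdist : dist u 0 < ε := by
        rw [Real.dist_eq, sub_zero, abs_of_nonneg hu0]; linarith
      have hIu : |I u - I 0| < δ/2 := by
        have := hεI hu hdist
        rwa [Real.dist_eq] at this
      have hIdiff : I 1 - I u < δ/2 := by
        rw [← h01]
        have := abs_lt.mp hIu
        linarith [this.1]
      have hA : β₁ * (u - u ^ p) ≤ 0 :=
        mul_nonpos_of_nonpos_of_nonneg (by linarith) (by linarith)
      have hδu : δ * u ^ p ≤ δ * (1/2) :=
        mul_le_mul_of_nonneg_left (by linarith) hδ.le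
      nlinarith [hmax1, hA, hδu, hIdiff]
    · -- u in [ε₀, 1/2]
      have hIu0 : 0 ≤ I u := hnonneg u hu
      have hsub : ε₀ / 2 ≤ u - u ^ p := by nlinarith
      have hA : β₁ * (u - u ^ p) ≤ β₁ * (ε₀ / 2) :=
        mul_le_mul_of_nonpos_left hsub hβneg.le
      have hβε : β₁ * (ε₀ / 2) < -(I 1) / 2 := by
        have h1 : β₁ * ε₀ < (-(I 1)/ε₀ - 1) * ε₀ :=
          mul_lt_mul_of_pos_right hβB2 hε₀pos
        have h2 : (-(I 1)/ε₀ - 1) * ε₀ = -(I 1) - ε₀ := by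
          field_simp
        rw [h2] at h1
        linarith
      have hup1 : u ^ p ≤ 1 := pow_le_one₀ hu0 hu1
      have hδu : δ * u ^ p ≤ δ * 1 := mul_le_mul_of_nonneg_left hup1 hδ.le
      nlinarith [hmax1, hA, hβε, hδu, hIu0]
  · have h0p : (0:ℝ) ^ p = 0 := zero_pow (by omega)
    rw [h0p, one_pow, h01]
    ring_nf
    linarith
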